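/- Consider the SIS model under multi-layer Markovian mobility, with F* = F(v), L* = L(v), and assume δ_i > 0 for at least one patch i. Set A = (L* + D)^{-1} B and M = I − F*. Then for every p ∈ [0,1]^{nm} with P = diag(p), the matrix A^{-1} + P + (I − P)M is invertible and the identity I − diag((I − M)(A^{-1} + P + (I − P)M)^{-1} p) = diag(F* (A^{-1} + P + (I − P)M)^{-1} A^{-1} 1) holds, where 1 is the all-ones vector; moreover, all diagonal entries of this diagonal matrix are nonnegative. -/

import Mathlib

open Matrix Finset Filter

namespace SISMobility

/-- Index type for (class, patch) pairs: `(α, i)` with `α ∈ {1,…,m}` a class and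
`i ∈ {1,…,n}` a patch. -/
abbrev Idx (n m : ℕ) := Fin m × Fin n

/-- A CTMC generator matrix: nonnegative off-diagonal entries and zero row sums
(so that the diagonal entry is minus the total outgoing rate). -/
def IsGenerator {n : ℕ} (Q : Matrix (Fin n) (Fin n) ℝ) : Prop :=
  (∀ i j, i ≠ j → 0 ≤ Q i j) ∧ ∀ i, ∑ j, Q i j = 0

/-- Strong connectivity of the digraph on `{1,…,n}` with an edge `(i,j)` whenever
`i ≠ j` and `Q i j > 0`. -/
def StronglyConnected {n : ℕ} (Q : Matrix (Fin n) (Fin n) ℝ) : Prop :=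
  ∀ i j : Fin n, Relation.ReflTransGen (fun a b => a ≠ b ∧ 0 < Q a b) i j

/-- The `nm × nm` block-diagonal infection-rate matrix `B` (m copies of `diag β`). -/
noncomputable def Bmat (n m : ℕ) (β : Fin n → ℝ) : Matrix (Idx n m) (Idx n m) ℝ :=
  Matrix.diagonal fun k => β k.2

/-- The `nm × nm` block-diagonal recovery-rate matrix `D` (m copies of `diag δ`). -/
noncomputable def Dmat (n m : ℕ) (δ : Fin n → ℝ) : Matrix (Idx n m) (Idx n m) ℝ :=
  Matrix.diagonal fun k => δ k.2

/-- The block-diagonal mobility matrix `L(x)`: the `α`-block has entries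
`l^α_{ii} = ∑_{j≠i} q^α_{ji} x^α_j / x^α_i` and `l^α_{ij} = -q^α_{ji} x^α_j / x^α_i`. -/
noncomputable def Lmat {n m : ℕ} (Q : Fin m → Matrix (Fin n) (Fin n) ℝ)
    (x : Idx n m → ℝ) : Matrix (Idx n m) (Idx n m) ℝ :=
  fun k l =>
    if k.1 = l.1 then
      if k.2 = l.2 then ∑ j ∈ Finset.univ.filter (· ≠ k.2), Q k.1 j k.2 * x (k.1, j) / x k
      else -(Q k.1 l.2 k.2 * x (k.1, l.2) / x k)
    else 0

/-- The population-fraction matrix `F(x)`: entry `((α,i),(γ,j))` equals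
`x^γ_i / ∑_η x^η_i` if `j = i` and `0` otherwise. -/
noncomputable def Fmat {n m : ℕ} (x : Idx n m → ℝ) : Matrix (Idx n m) (Idx n m) ℝ :=
  fun k l => if l.2 = k.2 then x (l.1, k.2) / ∑ η : Fin m, x (η, k.2) else 0

/-- Right-hand side of the infection dynamics
`ṗ = (B F(x) − D − L(x)) p − diag(p) B F(x) p`. -/
noncomputable def pRHS {n m : ℕ} (β δ : Fin n → ℝ) (Q : Fin m → Matrix (Fin n) (Fin n) ℝ)
    (x p : Idx n m → ℝ) : Idx n m → ℝ :=
  (Bmat n m β * Fmat x - Dmat n m δ - Lmat Q x).mulVec p -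
    (Matrix.diagonal p * (Bmat n m β * Fmat x)).mulVec p

/-- Right-hand side of the mobility dynamics `ẋ^α = (Q^α)ᵀ x^α`. -/
noncomputable def xRHS {n m : ℕ} (Q : Fin m → Matrix (Fin n) (Fin n) ℝ)
    (x : Idx n m → ℝ) : Idx n m → ℝ :=
  fun k => ∑ j, Q k.1 j k.2 * x (k.1, j)

/-- `(p, x)` is a solution of the SIS model under multi-layer Markovian mobility. -/
def IsSolution {n m : ℕ} (β δ : Fin n → ℝ) (Q : Fin m → Matrix (Fin n) (Fin n) ℝ)
    (p x : ℝ → Idx n m → ℝ) : Prop :=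
  ∀ t : ℝ, 0 ≤ t → ∀ k : Idx n m,
    HasDerivAt (fun s => p s k) (pRHS β δ Q (x t) (p t) k) t ∧
    HasDerivAt (fun s => x s k) (xRHS Q (x t) k) t

/-- The radial abscissa `μ(G)`: the largest real part of a (complex) eigenvalue of a
real matrix `G`. -/
noncomputable def muMax {ι : Type*} [Fintype ι] [DecidableEq ι] (G : Matrix ι ι ℝ) : ℝ :=
  sSup (Complex.re '' spectrum ℂ (G.map (algebraMap ℝ ℂ)))

/-- The spectral radius `ρ(G)` of a real matrix `G`. -/
noncomputable def specRad {ι : Type*} [Fintype ι] [DecidableEq ι] (G : Matrix ι ι ℝ) : ℝ :=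
  sSup ((fun z : ℂ => ‖z‖) '' spectrum ℂ (G.map (algebraMap ℝ ℂ)))

/-- The fixed-point map `H(p) = (I + A(diag p + (I − diag p) M))⁻¹ A p`. -/
noncomputable def Hfun {n m : ℕ} (A M : Matrix (Idx n m) (Idx n m) ℝ)
    (p : Idx n m → ℝ) : Idx n m → ℝ :=
  ((1 + A * (Matrix.diagonal p + (1 - Matrix.diagonal p) * M))⁻¹).mulVec (A.mulVec p)

end SISMobility

/-!
`T = A⁻¹ + P + (I − P)M` is a weakly chained diagonally dominant Z-matrix: its off-diagonal
entries are `≤ 0`, its row sums are `δᵢ/βᵢ + pᵢ ≥ 0`, and irreducibility of each `Qᵅ` links every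
row to a row of a patch with `δᵢ > 0`, whose row sum is positive. A minimum principle
(`Tx ≥ 0 → x ≥ 0`) then makes `T` nonsingular with `T⁻¹ ≥ 0`. As `T1 = A⁻¹1 + p`, we get
`T⁻¹p + T⁻¹A⁻¹1 = 1`, and the row-stochastic `F*` turns this into the identity, whose right-hand
side `F* T⁻¹ (δ/β)` is nonnegative.
-/

open Relation

section WCDD

variable {ι : Type*} [Fintype ι]

/-- Weakly chained diagonally dominant Z-matrix, with dominance of a row measured by its row sum. -/
structure IsWCDDZMatrix (K : Matrix ι ι ℝ) : Prop where
  apply_nonpos_of_ne : ∀ i j, i ≠ j → K i j ≤ 0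
  mulVec_one_nonneg : 0 ≤ K *ᵥ 1
  chained : ∀ i, ∃ j, ReflTransGen (fun a b => a ≠ b ∧ K a b < 0) i j ∧ 0 < (K *ᵥ 1) j

variable {K : Matrix ι ι ℝ}

theorem IsWCDDZMatrix.nonneg_of_mulVec_nonneg (hK : IsWCDDZMatrix K) {x : ι → ℝ}
    (hx : 0 ≤ K *ᵥ x) : 0 ≤ x := by
  intro i₀
  by_contra! hneg
  obtain ⟨i, -, hmin⟩ := univ.exists_min_image x ⟨i₀, mem_univ _⟩
  have hxi : x i < 0 := (hmin i₀ (mem_univ _)).trans_lt hneg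
  -- `(K *ᵥ x) j = ∑ l, K j l * (x l - x j) + (K *ᵥ 1) j * x j` is a sum of nonpositive terms
  -- at a minimiser `j`, so all of them vanish.
  have at_min : ∀ j, x j = x i → (K *ᵥ 1) j = 0 ∧ ∀ l, K j l < 0 → x l = x i := by
    intro j hj
    have hterm : ∀ l ∈ univ, K j l * (x l - x j) ≤ 0 := fun l _ => by
      rcases eq_or_ne j l with rfl | hjl
      · simp
      · exact mul_nonpos_of_nonpos_of_nonneg (hK.apply_nonpos_of_ne j l hjl)
          (by linarith [hmin l (mem_univ _)])
    have hsplit : (K *ᵥ x) j = ∑ l, K j l * (x l - x j) + (K *ᵥ 1) j * x j := by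
      simp [mulVec, dotProduct, mul_sub, sum_mul]
    have hrow : (K *ᵥ 1) j * x j ≤ 0 :=
      mul_nonpos_of_nonneg_of_nonpos (hK.mulVec_one_nonneg j) (hj ▸ hxi.le)
    have hsum := sum_nonpos hterm
    have hKxj : 0 ≤ (K *ᵥ x) j := hx j
    refine ⟨?_, fun l hl => ?_⟩
    · exact (mul_eq_zero.mp (by linarith : (K *ᵥ 1) j * x j = 0)).resolve_right (by linarith)
    · have hzero := (sum_eq_zero_iff_of_nonpos hterm).mp (by linarith) l (mem_univ _)
      linarith [(mul_eq_zero.mp hzero).resolve_left hl.ne]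
  obtain ⟨j, hpath, hpos⟩ := hK.chained i
  have hxj : x j = x i := by
    clear hpos
    induction hpath with
    | refl => rfl
    | tail _ hbc ih => exact (at_min _ ih).2 _ hbc.2
  exact hpos.ne' (at_min j hxj).1

protected theorem IsWCDDZMatrix.add (hK : IsWCDDZMatrix K) {G : Matrix ι ι ℝ}
    (hG : ∀ i j, i ≠ j → G i j ≤ 0) (hG1 : 0 ≤ G *ᵥ 1) : IsWCDDZMatrix (K + G) where
  apply_nonpos_of_ne i j hij := add_nonpos (hK.apply_nonpos_of_ne i j hij) (hG i j hij)
  mulVec_one_nonneg := by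
    rw [add_mulVec]
    exact add_nonneg hK.mulVec_one_nonneg hG1
  chained i := by
    obtain ⟨j, hpath, hpos⟩ := hK.chained i
    have hedge a b (hab : a ≠ b ∧ K a b < 0) : a ≠ b ∧ (K + G) a b < 0 :=
      ⟨hab.1, add_neg_of_neg_of_nonpos hab.2 (hG a b hab.1)⟩
    refine ⟨j, ReflTransGen.mono hedge _ _ hpath, ?_⟩
    rw [add_mulVec]
    exact add_pos_of_pos_of_nonneg hpos (hG1 j)

variable [DecidableEq ι]

theorem IsWCDDZMatrix.isUnit_det (hK : IsWCDDZMatrix K) : IsUnit K.det := by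
  rw [isUnit_iff_ne_zero]
  intro hdet
  obtain ⟨w, hw, hKw⟩ := exists_mulVec_eq_zero_iff.mpr hdet
  refine hw (le_antisymm ?_ (hK.nonneg_of_mulVec_nonneg hKw.ge))
  simpa using hK.nonneg_of_mulVec_nonneg (x := -w) (by simp [mulVec_neg, hKw])

theorem IsWCDDZMatrix.inv_mulVec_nonneg (hK : IsWCDDZMatrix K) {y : ι → ℝ} (hy : 0 ≤ y) :
    0 ≤ K⁻¹ *ᵥ y :=
  hK.nonneg_of_mulVec_nonneg (by rwa [mulVec_mulVec, mul_nonsing_inv _ hK.isUnit_det, one_mulVec])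

protected theorem IsWCDDZMatrix.diagonal_mul (hK : IsWCDDZMatrix K) {c : ι → ℝ}
    (hc : ∀ i, 0 < c i) : IsWCDDZMatrix (diagonal c * K) where
  apply_nonpos_of_ne i j hij := by
    rw [diagonal_mul]
    exact mul_nonpos_of_nonneg_of_nonpos (hc i).le (hK.apply_nonpos_of_ne i j hij)
  mulVec_one_nonneg i := by
    rw [← mulVec_mulVec, mulVec_diagonal]
    exact mul_nonneg (hc i).le (hK.mulVec_one_nonneg i)
  chained i := by
    obtain ⟨j, hpath, hpos⟩ := hK.chained i
    have hedge a b (hab : a ≠ b ∧ K a b < 0) : a ≠ b ∧ (diagonal c * K) a b < 0 := by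
      rw [diagonal_mul]
      exact ⟨hab.1, mul_neg_of_pos_of_neg (hc a) hab.2⟩
    refine ⟨j, ReflTransGen.mono hedge _ _ hpath, ?_⟩
    rw [← mulVec_mulVec, mulVec_diagonal]
    exact mul_pos (hc j) hpos

theorem diagonal_add_one_sub_diagonal_mul_one_sub_mulVec_one {F : Matrix ι ι ℝ}
    (hF : F ∈ rowStochastic ℝ ι) (p : ι → ℝ) :
    (diagonal p + (1 - diagonal p) * (1 - F)) *ᵥ 1 = p := by
  ext i
  simp [add_mulVec, ← mulVec_mulVec, sub_mulVec, hF.2, mulVec_diagonal]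

theorem diagonal_add_one_sub_diagonal_mul_one_sub_apply_nonpos {F : Matrix ι ι ℝ}
    (hF : F ∈ rowStochastic ℝ ι) {p : ι → ℝ} (hp : ∀ i, p i ≤ 1) {i j : ι} (hij : i ≠ j) :
    (diagonal p + (1 - diagonal p) * (1 - F)) i j ≤ 0 := by
  have hentry : (diagonal p + (1 - diagonal p) * (1 - F)) i j = -((1 - p i) * F i j) := by
    simp [sub_mul, mul_sub, one_apply_ne hij, diagonal_apply_ne _ hij]
  rw [hentry, neg_nonpos]
  exact mul_nonneg (sub_nonneg.mpr (hp i)) (nonneg_of_mem_rowStochastic hF)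

theorem IsWCDDZMatrix.add_diagonal_add_one_sub_diagonal_mul_one_sub {K F : Matrix ι ι ℝ}
    (hK : IsWCDDZMatrix K) (hF : F ∈ rowStochastic ℝ ι) {p : ι → ℝ}
    (hp : ∀ i, p i ∈ Set.Icc 0 1) :
    IsWCDDZMatrix (K + diagonal p + (1 - diagonal p) * (1 - F)) := by
  rw [add_assoc]
  refine hK.add (fun i j hij => ?_) ?_
  · exact diagonal_add_one_sub_diagonal_mul_one_sub_apply_nonpos hF (fun i => (hp i).2) hij
  · rw [diagonal_add_one_sub_diagonal_mul_one_sub_mulVec_one hF]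
    exact fun i => (hp i).1

theorem one_sub_diagonal_mul_inv_mulVec {T A F : Matrix ι ι ℝ} {p : ι → ℝ}
    (hT : IsUnit T.det) (hT1 : T *ᵥ 1 = A *ᵥ 1 + p) (hF : F *ᵥ 1 = 1) :
    1 - diagonal ((F * T⁻¹) *ᵥ p) = diagonal ((F * T⁻¹ * A) *ᵥ 1) := by
  have hsplit : T⁻¹ *ᵥ (A *ᵥ 1) + T⁻¹ *ᵥ p = 1 := by
    rw [← mulVec_add, ← hT1, mulVec_mulVec, nonsing_inv_mul _ hT, one_mulVec]
  have hF_split := congrArg (F *ᵥ ·) hsplit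
  simp only [mulVec_add, hF] at hF_split
  rw [← diagonal_one, diagonal_sub]
  congr 1
  ext i
  have hi := congrFun hF_split i
  simp only [Pi.add_apply, Pi.one_apply] at hi
  simp only [← mulVec_mulVec]
  linarith

end WCDD

namespace SISMobility

variable {n m : ℕ}

theorem Fmat_mem_rowStochastic {x : Idx n m → ℝ} (hx : ∀ k, 0 < x k) :
    Fmat x ∈ rowStochastic ℝ (Idx n m) := by
  refine mem_rowStochastic_iff_sum.mpr ⟨fun k l => ?_, fun k => ?_⟩
  · unfold Fmat
    split_ifs
    exacts [div_nonneg (hx _).le (sum_nonneg fun _ _ => (hx _).le), le_rfl]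
  · have hsum : 0 < ∑ η, x (η, k.2) := sum_pos (fun _ _ => hx _) ⟨k.1, mem_univ _⟩
    simp [Fintype.sum_prod_type, Fmat, ← sum_div, hsum.ne']

theorem Lmat_mulVec_one (Q : Fin m → Matrix (Fin n) (Fin n) ℝ) (x : Idx n m → ℝ) :
    Lmat Q x *ᵥ 1 = 0 := by
  ext ⟨α, i⟩
  simp only [mulVec, dotProduct, Pi.one_apply, mul_one, Pi.zero_apply, Fintype.sum_prod_type]
  rw [sum_eq_single α (fun γ _ hγ => by simp [Lmat, Ne.symm hγ]) (by simp),
    ← add_sum_erase _ _ (mem_univ i)]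
  have hoff : ∀ j ∈ univ.erase i, Lmat Q x (α, i) (α, j) = -(Q α j i * x (α, j) / x (α, i)) :=
    fun j hj => by simp [Lmat, (ne_of_mem_erase hj).symm]
  rw [sum_congr rfl hoff]
  simp [Lmat, filter_ne']

theorem Lmat_apply_nonpos {Q : Fin m → Matrix (Fin n) (Fin n) ℝ} (hQ : ∀ α, IsGenerator (Q α))
    {x : Idx n m → ℝ} (hx : ∀ k, 0 ≤ x k) {k l : Idx n m} (hkl : k ≠ l) : Lmat Q x k l ≤ 0 := by
  unfold Lmat
  split_ifs with h₁ h₂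
  · exact absurd (Prod.ext h₁ h₂) hkl
  · exact neg_nonpos.mpr (div_nonneg (mul_nonneg ((hQ k.1).1 _ _ (Ne.symm h₂)) (hx _)) (hx _))
  · exact le_rfl

theorem Lmat_apply_neg (Q : Fin m → Matrix (Fin n) (Fin n) ℝ) {x : Idx n m → ℝ}
    (hx : ∀ k, 0 < x k) {α : Fin m} {i j : Fin n} (hij : i ≠ j) (hq : 0 < Q α j i) :
    Lmat Q x (α, i) (α, j) < 0 := by
  simp only [Lmat, if_neg hij]
  exact neg_neg_of_pos (div_pos (mul_pos hq (hx _)) (hx _))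

theorem Dmat_mulVec_one (δ : Fin n → ℝ) : Dmat n m δ *ᵥ 1 = fun k => δ k.2 := by
  ext k
  simp [Dmat, mulVec_diagonal]

theorem Bmat_inv {β : Fin n → ℝ} (hβ : ∀ i, β i ≠ 0) :
    (Bmat n m β)⁻¹ = diagonal fun k => (β k.2)⁻¹ := by
  refine inv_eq_left_inv ?_
  simp [Bmat, hβ]

theorem reflTransGen_of_stronglyConnected {Q : Fin m → Matrix (Fin n) (Fin n) ℝ}
    (hQ : ∀ α, StronglyConnected (Q α)) {K : Matrix (Idx n m) (Idx n m) ℝ}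
    (hK : ∀ α i j, i ≠ j → 0 < Q α j i → K (α, i) (α, j) < 0) (i₀ : Fin n) (k : Idx n m) :
    ReflTransGen (fun a b => a ≠ b ∧ K a b < 0) k (k.1, i₀) := by
  have hedge (i j : Fin n) (hji : j ≠ i ∧ 0 < Q k.1 j i) :
      ((k.1, i) : Idx n m) ≠ (k.1, j) ∧ K (k.1, i) (k.1, j) < 0 :=
    ⟨by simp [hji.1.symm], hK k.1 i j hji.1.symm hji.2⟩
  exact ReflTransGen.lift (fun j => ((k.1, j) : Idx n m)) hedge _ _
    (reflTransGen_swap.mpr (hQ k.1 i₀ k.2))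

theorem isWCDDZMatrix_Lmat_add_Dmat {Q : Fin m → Matrix (Fin n) (Fin n) ℝ}
    (hQgen : ∀ α, IsGenerator (Q α)) (hQirr : ∀ α, StronglyConnected (Q α))
    {x : Idx n m → ℝ} (hx : ∀ k, 0 < x k) {δ : Fin n → ℝ} (hδ : ∀ i, 0 ≤ δ i)
    (hδpos : ∃ i, 0 < δ i) : IsWCDDZMatrix (Lmat Q x + Dmat n m δ) := by
  have hrow : (Lmat Q x + Dmat n m δ) *ᵥ 1 = fun k => δ k.2 := by
    rw [add_mulVec, Lmat_mulVec_one, Dmat_mulVec_one, zero_add]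
  obtain ⟨i₀, hi₀⟩ := hδpos
  refine ⟨fun k l hkl => ?_, hrow ▸ fun k => hδ k.2, fun k => ⟨(k.1, i₀), ?_, hrow ▸ hi₀⟩⟩
  · simpa [Dmat, diagonal_apply_ne _ hkl] using Lmat_apply_nonpos hQgen (fun k => (hx k).le) hkl
  · refine reflTransGen_of_stronglyConnected hQirr (fun α i j hij hq => ?_) i₀ k
    have hne : ((α, i) : Idx n m) ≠ (α, j) := by simp [hij]
    simpa [Dmat, diagonal_apply_ne _ hne] using Lmat_apply_neg Q hx hij hq

end SISMobility

open SISMobility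

theorem diag_identity_nonneg_general
    (n m : ℕ)
    (Q : Fin m → Matrix (Fin n) (Fin n) ℝ)
    (hQgen : ∀ α, IsGenerator (Q α)) (hQirr : ∀ α, StronglyConnected (Q α))
    (β δ : Fin n → ℝ) (hβ : ∀ i, 0 < β i) (hδ : ∀ i, 0 ≤ δ i)
    (hδpos : ∃ i, 0 < δ i)
    (vα : Fin m → Fin n → ℝ) (hvαpos : ∀ α i, 0 < vα α i)
    (Npop : Fin m → ℝ) (hNpop : ∀ α, 0 < Npop α)
    (v : Idx n m → ℝ) (hv : ∀ k, v k = Npop k.1 * vα k.1 k.2)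
    (A M : Matrix (Idx n m) (Idx n m) ℝ)
    (hA : A = (Lmat Q v + Dmat n m δ)⁻¹ * Bmat n m β)
    (hM : M = 1 - Fmat v) :
    ∀ p : Idx n m → ℝ, (∀ k, p k ∈ Set.Icc (0 : ℝ) 1) →
      IsUnit (A⁻¹ + Matrix.diagonal p + (1 - Matrix.diagonal p) * M).det ∧
      (1 : Matrix (Idx n m) (Idx n m) ℝ) -
          Matrix.diagonal (((1 - M) *
            (A⁻¹ + Matrix.diagonal p + (1 - Matrix.diagonal p) * M)⁻¹).mulVec p)
        = Matrix.diagonal ((Fmat v *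
            (A⁻¹ + Matrix.diagonal p + (1 - Matrix.diagonal p) * M)⁻¹ *
              A⁻¹).mulVec (1 : Idx n m → ℝ)) ∧
      ∀ k, 0 ≤ ((Fmat v *
          (A⁻¹ + Matrix.diagonal p + (1 - Matrix.diagonal p) * M)⁻¹ *
            A⁻¹).mulVec (1 : Idx n m → ℝ)) k := by
  intro p hp
  have hvpos : ∀ k, 0 < v k := fun k => hv k ▸ mul_pos (hNpop _) (hvαpos _ _)
  have hF := Fmat_mem_rowStochastic hvpos
  have hLD := isWCDDZMatrix_Lmat_add_Dmat hQgen hQirr hvpos hδ hδpos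
  have hAinv : IsWCDDZMatrix A⁻¹ := by
    rw [hA, Matrix.mul_inv_rev, nonsing_inv_nonsing_inv _ hLD.isUnit_det,
      Bmat_inv fun i => (hβ i).ne']
    exact hLD.diagonal_mul fun k => inv_pos.mpr (hβ k.2)
  subst hM
  have hT := hAinv.add_diagonal_add_one_sub_diagonal_mul_one_sub hF hp
  refine ⟨hT.isUnit_det, ?_, fun k => ?_⟩
  · rw [sub_sub_cancel]
    refine one_sub_diagonal_mul_inv_mulVec hT.isUnit_det ?_ hF.2
    rw [add_assoc, add_mulVec, diagonal_add_one_sub_diagonal_mul_one_sub_mulVec_one hF]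
  · simp only [← mulVec_mulVec]
    exact nonneg_mulVec_of_mem_rowStochastic hF
      (hT.inv_mulVec_nonneg hAinv.mulVec_one_nonneg) k

/-- with `A = (L* + D)⁻¹ B` and `M = I − F*`, for every
`p ∈ [0,1]^{nm}` (with `P = diag p`) the matrix `A⁻¹ + P + (I − P)M` is invertible,
the identity
`I − diag((I − M)(A⁻¹ + P + (I − P)M)⁻¹ p) = diag(F*(A⁻¹ + P + (I − P)M)⁻¹ A⁻¹ 1)`
holds, and all diagonal entries of this diagonal matrix are nonnegative. -/
theorem diag_identity_nonneg
    (n m : ℕ) (hn : 2 ≤ n) (hm : 1 ≤ m)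
    (Q : Fin m → Matrix (Fin n) (Fin n) ℝ)
    (hQgen : ∀ α, IsGenerator (Q α)) (hQirr : ∀ α, StronglyConnected (Q α))
    (β δ : Fin n → ℝ) (hβ : ∀ i, 0 < β i) (hδ : ∀ i, 0 ≤ δ i)
    (hδpos : ∃ i, 0 < δ i)
    (vα : Fin m → Fin n → ℝ) (hvαpos : ∀ α i, 0 < vα α i)
    (hvαnorm : ∀ α, ∑ i, vα α i = 1)
    (hvαeig : ∀ α i, ∑ j, Q α j i * vα α j = 0)
    (Npop : Fin m → ℝ) (hNpop : ∀ α, 0 < Npop α)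
    (v : Idx n m → ℝ) (hv : ∀ k, v k = Npop k.1 * vα k.1 k.2)
    (A M : Matrix (Idx n m) (Idx n m) ℝ)
    (hA : A = (Lmat Q v + Dmat n m δ)⁻¹ * Bmat n m β)
    (hM : M = 1 - Fmat v) :
    ∀ p : Idx n m → ℝ, (∀ k, p k ∈ Set.Icc (0 : ℝ) 1) →
      IsUnit (A⁻¹ + Matrix.diagonal p + (1 - Matrix.diagonal p) * M).det ∧
      (1 : Matrix (Idx n m) (Idx n m) ℝ) -
          Matrix.diagonal (((1 - M) *
            (A⁻¹ + Matrix.diagonal p + (1 - Matrix.diagonal p) * M)⁻¹).mulVec p)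
        = Matrix.diagonal ((Fmat v *
            (A⁻¹ + Matrix.diagonal p + (1 - Matrix.diagonal p) * M)⁻¹ *
              A⁻¹).mulVec (1 : Idx n m → ℝ)) ∧
      ∀ k, 0 ≤ ((Fmat v *
          (A⁻¹ + Matrix.diagonal p + (1 - Matrix.diagonal p) * M)⁻¹ *
            A⁻¹).mulVec (1 : Idx n m → ℝ)) k :=
  diag_identity_nonneg_general n m Q hQgen hQirr β δ hβ hδ hδpos vα hvαpos Npop hNpop v hv A M hA hM
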